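/- arXiv:math/0212202 — 3 statements merged into one kernel-verified Lean document; each statement's English description precedes it below -/
import Mathlib

section
/- The power series Z(T) = exp(∑_{n≥1} N_n T^n / n), where N_n = |X(F_{q^n})| is the number of F_{q^n}-rational points of a variety X over the finite field F_q, has integer coefficients. -/
/-!
A `K`-point of `X` over `k` is the same as a point `x ∈ X` together with a `k`-embedding
`κ(x) → K`. For `[K : k] = n` a point with `[κ(x) : k] = d` admits exactly `d` such embeddings
when `d ∣ n` and none otherwise, so `N_n = ∑_{d ∣ n} d M_d`, where `M_d` is the (finite) number
of points of degree `d`. Hence `Z' / Z = ∑_d d M_d T^(d-1) / (1 - T^d)`, the logarithmic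
derivative of `∏_d (1 - T^d)^(-M_d)`. In characteristic zero a power series with constant
coefficient `1` is determined by its logarithmic derivative coefficient by coefficient, so up
to degree `m` the series `Z` agrees with the finite product `∏_{d ≤ m} (1 - T^d)^(-M_d)`,
which has integer coefficients.
-/

open CategoryTheory PowerSeries Finset

theorem Derivation.map_prod_of_map_eq_mul {ι R A : Type*} [CommSemiring R] [CommSemiring A]
    [Algebra R A] (D : Derivation R A A) (s : Finset ι) {w g : ι → A}
    (h : ∀ i ∈ s, D (w i) = g i * w i) :
    D (∏ i ∈ s, w i) = (∑ i ∈ s, g i) * ∏ i ∈ s, w i := by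
  classical
  induction s using Finset.induction_on with
  | empty => simp
  | insert a s ha ih =>
    rw [prod_insert ha, sum_insert ha, D.leibniz, smul_eq_mul, smul_eq_mul,
      ih fun i hi => h i (mem_insert_of_mem hi), h a (mem_insert_self a s)]
    ring

theorem Derivation.map_pow_of_map_eq_mul {R A : Type*} [CommSemiring R] [CommSemiring A]
    [Algebra R A] (D : Derivation R A A) {a g : A} (h : D a = g * a) (n : ℕ) :
    D (a ^ n) = (n * g) * a ^ n := by
  simpa [nsmul_eq_mul] using D.map_prod_of_map_eq_mul (range n) fun _ _ => h

namespace PowerSeries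

variable {R : Type*}

variable (R) in
noncomputable def invOneSubXPow [Semiring R] (d : ℕ) : R⟦X⟧ :=
  mk fun i => if d ∣ i then 1 else 0

@[simp]
lemma coeff_invOneSubXPow [Semiring R] (d i : ℕ) :
    coeff i (invOneSubXPow R d) = if d ∣ i then 1 else 0 :=
  coeff_mk _ _

@[simp]
lemma constantCoeff_invOneSubXPow [Semiring R] (d : ℕ) :
    constantCoeff (invOneSubXPow R d) = 1 := by
  simp [← coeff_zero_eq_constantCoeff_apply]

@[simp]
lemma map_invOneSubXPow {S : Type*} [Semiring R] [Semiring S] (φ : R →+* S) (d : ℕ) :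
    map φ (invOneSubXPow R d) = invOneSubXPow S d := by
  ext i
  simp [apply_ite φ]

lemma coeff_X_pow_pred_mul_invOneSubXPow [Semiring R] {d : ℕ} (hd : d ≠ 0) (j : ℕ) :
    coeff j (X ^ (d - 1) * invOneSubXPow R d) = if d ∣ j + 1 then 1 else 0 := by
  rw [coeff_X_pow_mul', coeff_invOneSubXPow]
  by_cases hj : d - 1 ≤ j
  · simp only [if_pos hj, show j + 1 = j - (d - 1) + d by omega, Nat.dvd_add_self_right]
  · rw [if_neg hj, if_neg fun hdvd => hj ?_]
    have := Nat.le_of_dvd j.succ_pos hdvd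
    omega

lemma one_sub_X_pow_mul_invOneSubXPow [Ring R] {d : ℕ} (hd : d ≠ 0) :
    (1 - X ^ d) * invOneSubXPow R d = 1 := by
  have hX : (X : R⟦X⟧) ^ d = X * X ^ (d - 1) := by
    rw [← pow_succ', Nat.sub_add_cancel (Nat.one_le_iff_ne_zero.mpr hd)]
  ext (_ | j)
  · simp [zero_pow hd]
  · rw [sub_mul, one_mul, hX, mul_assoc, map_sub, coeff_succ_X_mul,
      coeff_X_pow_pred_mul_invOneSubXPow hd, coeff_invOneSubXPow, coeff_one]
    simp

lemma derivative_invOneSubXPow [CommRing R] {d : ℕ} (hd : d ≠ 0) :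
    d⁄dX R (invOneSubXPow R d) =
      ((d : R⟦X⟧) * X ^ (d - 1) * invOneSubXPow R d) * invOneSubXPow R d := by
  set F := invOneSubXPow R d
  have hF := one_sub_X_pow_mul_invOneSubXPow (R := R) hd
  have hF' := congrArg (d⁄dX R) hF
  rw [Derivation.leibniz, map_sub, Derivation.map_one_eq_zero, Derivation.leibniz_pow,
    derivative_X, smul_eq_mul, smul_eq_mul, smul_eq_mul,
    nsmul_eq_mul, mul_one] at hF'
  linear_combination (-d⁄dX R F) * hF + F * hF'

theorem coeff_eq_of_derivative_eq_mul [CommRing R] [IsDomain R] [CharZero R]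
    {Z W A B : R⟦X⟧} {m : ℕ} (hZ : d⁄dX R Z = A * Z) (hW : d⁄dX R W = B * W)
    (h0 : constantCoeff Z = constantCoeff W) (hAB : ∀ j < m, coeff j A = coeff j B) :
    ∀ j ≤ m, coeff j Z = coeff j W := by
  intro j
  induction j using Nat.strong_induction_on with
  | _ j ih =>
  intro hj
  cases j with
  | zero => simpa using h0
  | succ j =>
    have key : coeff j (A * Z) = coeff j (B * W) := by
      rw [coeff_mul, coeff_mul]
      refine sum_congr rfl fun p hp => ?_
      rw [HasAntidiagonal.mem_antidiagonal] at hp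
      rw [hAB p.1 (by omega), ih p.2 (by omega) (by omega)]
    rw [← hZ, ← hW, coeff_derivative, coeff_derivative] at key
    exact mul_right_cancel₀ (Nat.cast_add_one_ne_zero j) key

lemma derivative_prod_invOneSubXPow_pow [CommRing R] (s : Finset ℕ) (hs : 0 ∉ s) (M : ℕ → ℕ) :
    d⁄dX R (∏ d ∈ s, invOneSubXPow R d ^ M d) =
      (∑ d ∈ s, C (M d * d : R) * (X ^ (d - 1) * invOneSubXPow R d)) *
        ∏ d ∈ s, invOneSubXPow R d ^ M d := by
  refine (d⁄dX R).map_prod_of_map_eq_mul s fun d hd => ?_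
  rw [(d⁄dX R).map_pow_of_map_eq_mul (derivative_invOneSubXPow (ne_of_mem_of_not_mem hd hs))]
  simp only [map_mul, map_natCast]
  ring

lemma coeff_sum_C_mul_X_pow_pred_mul_invOneSubXPow [CommRing R] (M : ℕ → ℕ) {m j : ℕ}
    (hj : j < m) :
    coeff j (∑ d ∈ Icc 1 m, C (M d * d : R) * (X ^ (d - 1) * invOneSubXPow R d)) =
      ∑ d ∈ (j + 1).divisors, (M d * d : R) := by
  have hdiv : (Icc 1 m).filter (· ∣ j + 1) = (j + 1).divisors := by
    ext d
    simp only [mem_filter, mem_Icc, Nat.mem_divisors]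
    constructor
    · rintro ⟨-, hd⟩
      exact ⟨hd, j.succ_ne_zero⟩
    · rintro ⟨hd, -⟩
      exact ⟨⟨Nat.pos_of_dvd_of_pos hd j.succ_pos, (Nat.le_of_dvd j.succ_pos hd).trans hj⟩, hd⟩
  rw [map_sum, ← hdiv, sum_filter]
  refine sum_congr rfl fun d hd => ?_
  rw [coeff_C_mul, coeff_X_pow_pred_mul_invOneSubXPow (by simp at hd; omega)]
  simp

theorem coeff_eq_coeff_prod_invOneSubXPow_pow [CommRing R] [IsDomain R] [CharZero R]
    {Z : R⟦X⟧} (M : ℕ → ℕ) (hZ0 : constantCoeff Z = 1)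
    (hZ : d⁄dX R Z = mk (fun j => ∑ d ∈ (j + 1).divisors, (d * M d : R)) * Z) (m : ℕ) :
    coeff m Z = coeff m (∏ d ∈ Icc 1 m, invOneSubXPow R d ^ M d) := by
  refine coeff_eq_of_derivative_eq_mul hZ
    (derivative_prod_invOneSubXPow_pow _ (by simp) M) (by simp [hZ0]) (fun j hj => ?_) m le_rfl
  rw [coeff_mk, coeff_sum_C_mul_X_pow_pred_mul_invOneSubXPow M hj]
  simp only [mul_comm]

theorem exists_int_coeff_of_derivative_eq_mul [CommRing R] [IsDomain R] [CharZero R]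
    {Z : R⟦X⟧} (M : ℕ → ℕ) (hZ0 : constantCoeff Z = 1)
    (hZ : d⁄dX R Z = mk (fun j => ∑ d ∈ (j + 1).divisors, (d * M d : R)) * Z) (m : ℕ) :
    ∃ z : ℤ, coeff m Z = z := by
  refine ⟨coeff m (∏ d ∈ Icc 1 m, invOneSubXPow ℤ d ^ M d), ?_⟩
  rw [coeff_eq_coeff_prod_invOneSubXPow_pow M hZ0 hZ, ← eq_intCast (Int.castRingHom R),
    ← coeff_map]
  simp [map_prod]

end PowerSeries

theorem Algebra.FiniteType.finite_algHom {R A B : Type*} [CommSemiring R] [CommSemiring A]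
    [Algebra R A] [Algebra.FiniteType R A] [Semiring B] [Algebra R B] [Finite B] :
    Finite (A →ₐ[R] B) := by
  obtain ⟨s, hs⟩ := Algebra.FiniteType.out (R := R) (A := A)
  exact Finite.of_injective (fun φ (a : s) => φ a) fun φ ψ h =>
    AlgHom.ext_of_adjoin_eq_top hs fun a ha => congrFun h ⟨a, ha⟩

theorem Nat.card_sigma_of_card_eq {α : Type*} {β : α → Type*} [Finite (Σ a, β a)] {c : ℕ}
    (hc : c ≠ 0) (h : ∀ a, Nat.card (β a) = c) : Nat.card (Σ a, β a) = Nat.card α * c := by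
  have hβ (a : α) : Nonempty (β a) ∧ Finite (β a) := Nat.card_ne_zero.mp (h a ▸ hc)
  have : Finite α := Finite.of_surjective Sigma.fst fun a => ⟨⟨a, (hβ a).1.some⟩, rfl⟩
  have : ∀ a, Finite (β a) := fun a => (hβ a).2
  have := Fintype.ofFinite α
  rw [Nat.card_sigma, Finset.sum_congr rfl fun a _ => h a, Finset.sum_const, smul_eq_mul,
    Finset.card_univ, Nat.card_eq_fintype_card]

universe u

def CommRingCat.homUnderEquivAlgHom {k : Type u} [CommRing k] {A : CommRingCat.{u}}
    (σ : CommRingCat.of k ⟶ A) (K : Type u) [CommRing K] [Algebra k K] :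
    {φ : A ⟶ .of K // σ ≫ φ = CommRingCat.ofHom (algebraMap k K)} ≃
      (letI := σ.hom.toAlgebra; A →ₐ[k] K) :=
  letI := σ.hom.toAlgebra
  { toFun φ :=
      { toRingHom := φ.1.hom
        commutes' := RingHom.congr_fun (congrArg CommRingCat.Hom.hom φ.2) }
    invFun ψ := ⟨CommRingCat.ofHom ψ.toRingHom, CommRingCat.hom_ext (RingHom.ext ψ.commutes)⟩
    left_inv _ := rfl
    right_inv _ := rfl }

namespace AlgebraicGeometry

section Points

variable {k : Type u} [CommRing k] {X Y : Scheme.{u}} (K : Type u) [CommRing K] [Algebra k K]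

def RationalPoints (f : X ⟶ Spec (.of k)) : Type u :=
  {g : Spec (.of K) ⟶ X // g ≫ f = Spec.map (CommRingCat.ofHom (algebraMap k K))}

namespace RationalPoints

noncomputable def map (e : X ⟶ Y) (g : Y ⟶ Spec (.of k)) :
    RationalPoints K (e ≫ g) → RationalPoints K g :=
  fun p => ⟨p.1 ≫ e, by rw [Category.assoc]; exact p.2⟩

lemma map_injective (e : X ⟶ Y) [Mono e] (g : Y ⟶ Spec (.of k)) :
    Function.Injective (map K e g) :=
  fun _ _ h => Subtype.ext ((cancel_mono e).mp (congrArg Subtype.val h))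

lemma finite_of_spec {A : CommRingCat.{u}} (σ : CommRingCat.of k ⟶ A) (hσ : σ.hom.FiniteType)
    [Finite K] : Finite (RationalPoints K (Spec.map σ)) := by
  algebraize [σ.hom]
  have := Algebra.FiniteType.finite_algHom (R := k) (A := A) (B := K)
  have hcomm (p : RationalPoints K (Spec.map σ)) :
      σ ≫ Spec.preimage p.1 = CommRingCat.ofHom (algebraMap k K) :=
    Spec.map_injective (by simpa [Spec.map_comp] using p.2)
  refine Finite.of_injective (fun p => CommRingCat.homUnderEquivAlgHom σ K ⟨_, hcomm p⟩)
    fun p q h => Subtype.ext (Spec.homEquiv.injective ?_)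
  exact congrArg Subtype.val ((CommRingCat.homUnderEquivAlgHom σ K).injective h)

lemma finite_of_isAffine [IsAffine X] (f : X ⟶ Spec (.of k)) [LocallyOfFiniteType f]
    [Finite K] : Finite (RationalPoints K f) := by
  set σ := Spec.preimage (X.isoSpec.inv ≫ f)
  have hf : f = X.isoSpec.hom ≫ Spec.map σ := by simp [σ]
  have hσ : σ.hom.FiniteType := by
    rw [← HasRingHomProperty.Spec_iff (P := @LocallyOfFiniteType), Spec.map_preimage]
    infer_instance
  have := finite_of_spec K σ hσ
  rw [hf]
  exact Finite.of_injective _ (map_injective K X.isoSpec.hom (Spec.map σ))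

lemma map_sigma_surjective {K : Type u} [Field K] [Algebra k K] (f : X ⟶ Spec (.of k))
    (𝒰 : X.OpenCover) :
    Function.Surjective fun p : Σ i, RationalPoints K (𝒰.f i ≫ f) => map K (𝒰.f p.1) f p.2 := by
  rintro ⟨g, hg⟩
  -- `Spec K` is a single point, so `g` lands in the chart containing the image of that point.
  let i := 𝒰.idx (g (IsLocalRing.closedPoint K))
  have hrange : Set.range g ⊆ Set.range (𝒰.f i) := by
    rintro _ ⟨y, rfl⟩
    rw [Subsingleton.elim y (IsLocalRing.closedPoint K)]
    exact 𝒰.covers _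
  refine ⟨⟨i, IsOpenImmersion.lift (𝒰.f i) g hrange, ?_⟩, ?_⟩
  · rw [← Category.assoc, IsOpenImmersion.lift_fac]
    exact hg
  · exact Subtype.ext (IsOpenImmersion.lift_fac _ _ hrange)

lemma finite {K : Type u} [Field K] [Algebra k K] [Finite K] (f : X ⟶ Spec (.of k))
    [LocallyOfFiniteType f] [QuasiCompact f] : Finite (RationalPoints K f) := by
  have : CompactSpace X := (quasiCompact_iff_compactSpace f).mp inferInstance
  let 𝒰 := X.affineCover.finiteSubcover
  have (i : 𝒰.I₀) : Finite (RationalPoints K (𝒰.f i ≫ f)) := finite_of_isAffine K _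
  exact Finite.of_surjective _ (map_sigma_surjective f 𝒰)

end RationalPoints

variable {K : Type u} [Field K] [Algebra k K] (f : X ⟶ Spec (.of k))

noncomputable abbrev residueFieldAlgebra (x : X) : Algebra k (X.residueField x) :=
  (Spec.preimage (X.fromSpecResidueField x ≫ f)).hom.toAlgebra

variable (K) in
def ResidueFieldAlgHom (x : X) : Type u :=
  letI := residueFieldAlgebra f x
  X.residueField x →ₐ[k] K

noncomputable def rationalPointsEquivSigma :
    RationalPoints K f ≃ Σ x, ResidueFieldAlgHom K f x :=
  let σ (x : X) := Spec.preimage (X.fromSpecResidueField x ≫ f)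
  have over_iff (q : Σ x, X.residueField x ⟶ .of K) :
      σ q.1 ≫ q.2 = CommRingCat.ofHom (algebraMap k K) ↔
        (Scheme.SpecToEquivOfField K X).symm q ≫ f =
          Spec.map (CommRingCat.ofHom (algebraMap k K)) := by
    rw [Scheme.SpecToEquivOfField_symm_apply, Category.assoc, ← Spec.map_preimage
      (X.fromSpecResidueField q.1 ≫ f), ← Spec.map_comp, Spec.map_inj]
  ((Scheme.SpecToEquivOfField K X).symm.subtypeEquiv over_iff).symm.trans <|
    (⟨fun q => ⟨q.1.1, q.1.2, q.2⟩, fun q => ⟨⟨q.1, q.2.1⟩, q.2.2⟩, fun _ => rfl, fun _ => rfl⟩ :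
        {q : Σ x, X.residueField x ⟶ .of K // σ q.1 ≫ q.2 = _} ≃ Σ x, {φ // σ x ≫ φ = _}).trans <|
    Equiv.sigmaCongrRight fun x => CommRingCat.homUnderEquivAlgHom (σ x) K

end Points

section Counting

variable {k : Type u} [Field k] {X : Scheme.{u}} (f : X ⟶ Spec (.of k))

noncomputable def pointDegree (x : X) : ℕ :=
  letI := residueFieldAlgebra f x
  Module.finrank k (X.residueField x)

noncomputable def numPointsOfDegree (d : ℕ) : ℕ :=
  Nat.card {x : X // pointDegree f x = d}

theorem card_rationalPoints (K : Type u) [Field K] [Algebra k K] [Finite K]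
    [LocallyOfFiniteType f] [QuasiCompact f] :
    Nat.card (RationalPoints K f) =
      ∑ d ∈ (Module.finrank k K).divisors, d * numPointsOfDegree f d := by
  set n := Module.finrank k K
  have : Finite k := Finite.of_injective _ (algebraMap k K).injective
  have : Module.Finite k K := Module.Finite.of_finite
  have hn : n ≠ 0 := Module.finrank_pos.ne'
  have := RationalPoints.finite (K := K) f
  let P := Σ x, ResidueFieldAlgHom K f x
  have : Finite P := .of_equiv _ (rationalPointsEquivSigma f)
  have hdvd (p : P) : pointDegree f p.1 ∈ n.divisors :=
    letI := residueFieldAlgebra f p.1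
    Nat.mem_divisors.mpr ⟨FiniteField.nonempty_algHom_iff_finrank_dvd.mp ⟨p.2⟩, hn⟩
  have hfiber (d : n.divisors) :
      Nat.card {p : P // pointDegree f p.1 = d} = numPointsOfDegree f d * d := by
    let e := Equiv.subtypeSigmaEquiv (ResidueFieldAlgHom K f) fun x => pointDegree f x = d
    have := Finite.of_equiv _ e
    rw [Nat.card_congr e]
    refine Nat.card_sigma_of_card_eq (Nat.pos_of_mem_divisors d.2).ne' fun x => ?_
    let := residueFieldAlgebra f x.1
    have hx : pointDegree f x.1 ∣ n := x.2.symm ▸ Nat.dvd_of_mem_divisors d.2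
    exact (FiniteField.natCard_algHom_of_finrank_dvd hx).trans x.2
  rw [Nat.card_congr (rationalPointsEquivSigma f), ← Nat.card_congr
    (Equiv.sigmaSubtypeFiberEquiv (fun p : P => pointDegree f p.1) (· ∈ n.divisors) hdvd),
    Nat.card_sigma, Finset.sum_congr rfl fun d _ => hfiber d, ← Finset.sum_coe_sort n.divisors]
  simp [mul_comm]

end Counting

end AlgebraicGeometry

open AlgebraicGeometry

theorem hasse_weil_zeta_integer_coefficients_general
    (k : Type) [Field k] [Fintype k]
    (X : Scheme) (f : X ⟶ Spec (CommRingCat.of k))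
    [LocallyOfFiniteType f] [QuasiCompact f]
    (K : ℕ → Type) [∀ n, Field (K n)] [∀ n, Algebra k (K n)]
    (hK : ∀ n, 1 ≤ n → Module.finrank k (K n) = n)
    (N : ℕ → ℕ)
    (hN : ∀ n, 1 ≤ n → N n =
      Nat.card {g : Spec (CommRingCat.of (K n)) ⟶ X //
        g ≫ f = Spec.map (CommRingCat.ofHom (algebraMap k (K n)))})
    (S : PowerSeries ℚ)
    (hS : S = PowerSeries.mk fun n => if n = 0 then 0 else (N n : ℚ) / n)
    (Z : PowerSeries ℚ)
    (hZ0 : constantCoeff Z = 1)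
    (hZ' : d⁄dX ℚ Z = d⁄dX ℚ S * Z) :
    ∀ m : ℕ, ∃ z : ℤ, coeff m Z = (z : ℚ) := by
  have hN_eq_sum (n : ℕ) (hn : n ≠ 0) :
      (N n : ℚ) = ∑ d ∈ n.divisors, (d * numPointsOfDegree f d : ℚ) := by
    have hrank := hK n (Nat.one_le_iff_ne_zero.mpr hn)
    have : Module.Finite k (K n) :=
      Module.finite_of_finrank_pos (hrank.symm ▸ Nat.pos_of_ne_zero hn)
    have : Finite (K n) := Module.finite_of_finite k
    rw [hN n (Nat.one_le_iff_ne_zero.mpr hn)]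
    change ((Nat.card (RationalPoints (K n) f) : ℕ) : ℚ) = _
    rw [card_rationalPoints f (K n), hrank]
    push_cast
    rfl
  have hS' :
      d⁄dX ℚ S = mk fun j => ∑ d ∈ (j + 1).divisors, (d * numPointsOfDegree f d : ℚ) := by
    ext j
    rw [hS, coeff_derivative, coeff_mk, coeff_mk, if_neg j.succ_ne_zero,
      ← hN_eq_sum (j + 1) j.succ_ne_zero]
    push_cast
    field_simp
  exact exists_int_coeff_of_derivative_eq_mul _ hZ0 (hS' ▸ hZ')

/-- Dwork: let `X` be a variety (reduced separated scheme of finite type)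
over a finite field `k = F_q`, and for `n ≥ 1` let `N_n = |X(F_{q^n})|` be the number of
points of `X` rational over the degree-`n` extension `K n` of `k`.  Then the Hasse–Weil
series `Z(T) = exp(∑_{n≥1} (N_n/n) Tⁿ) ∈ ℚ⟦T⟧` has integer coefficients.
(`Z = exp(S)` is characterized by `Z(0) = 1` and `Z' = S'·Z`.) -/
theorem hasse_weil_zeta_integer_coefficients
    (k : Type) [Field k] [Fintype k]
    (X : Scheme) (f : X ⟶ Spec (CommRingCat.of k))
    [IsReduced X] [AlgebraicGeometry.IsSeparated f]
    [LocallyOfFiniteType f] [QuasiCompact f]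
    (K : ℕ → Type) [∀ n, Field (K n)] [∀ n, Algebra k (K n)]
    (hK : ∀ n, 1 ≤ n → Module.finrank k (K n) = n)
    (N : ℕ → ℕ)
    (hN : ∀ n, 1 ≤ n → N n =
      Nat.card {g : Spec (CommRingCat.of (K n)) ⟶ X //
        g ≫ f = Spec.map (CommRingCat.ofHom (algebraMap k (K n)))})
    (S : PowerSeries ℚ)
    (hS : S = PowerSeries.mk fun n => if n = 0 then 0 else (N n : ℚ) / n)
    (Z : PowerSeries ℚ)
    (hZ0 : constantCoeff Z = 1)
    (hZ' : d⁄dX ℚ Z = d⁄dX ℚ S * Z) :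
    ∀ m : ℕ, ∃ z : ℤ, coeff m Z = (z : ℚ) :=
  hasse_weil_zeta_integer_coefficients_general k X f K hK N hN S hS Z hZ0 hZ'
end

section
/- Let G be a finite group acting on a set Y (or variety Y over k with χ_c additive and multiplicative), and for each cyclic subgroup C of G let φ_{Y,Y/C,C} denote the locus of points of Y/C whose decomposition group is exactly C. Then for any cyclic subgroup C of G, the recursion formula |C|·[Y/C] = ∑_{A subgroup of C} |A|·χ_c([φ_{Y,Y/A,A}]) holds, given that the loci φ_{Y,Y/C,A} for subgroups A of C partition Y/C and that χ_c([φ_{Y,Y/C,A}]) = (|A|/|N_C(A)|)·χ_c([φ_{Y,Y/A,A}]). -/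
theorem Subgroup.card_normalizer_of_normal {G : Type*} [Group G] (A : Subgroup G) [A.Normal] :
    Nat.card (Subgroup.normalizer (A : Set G)) = Nat.card G := by
  rw [Subgroup.normalizer_eq_top_iff.mpr ‹_›, Subgroup.card_top]

/-- the recursion formula `|C|·[Y/C] = ∑_{A ≤ C} |A|·χ_c([φ_{Y,Y/A,A}])`
for a cyclic subgroup `C` of a Galois group.  Self-contained version: let `C` be a finite
cyclic group, let `R` be a commutative `ℚ`-algebra (playing the role of
`K₀^mot(Var_k) ⊗ ℚ`), let `y ∈ R` be the class `[Y/C]`, for each subgroup `A` of `C` let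
`z A = χ_c([φ_{Y,Y/C,A}])` (the class of the stratum of `Y/C` with decomposition group
`A`) and `x A = χ_c([φ_{Y,Y/A,A}])`.  Assume the strata partition `Y/C`, i.e.
`y = ∑_{A ≤ C} z A`, and the normalization `z A = (|A|/|N_C(A)|)·x A`.  Then
`|C|·y = ∑_{A ≤ C} |A|·x A`. -/
theorem chi_c_recursion_formula
    {C : Type*} [Group C] [Finite C] [IsCyclic C]
    {R : Type*} [CommRing R] [Algebra ℚ R]
    (x z : Subgroup C → R) (y : R)
    (hpart : y = ∑ᶠ A : Subgroup C, z A)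
    (hnorm : ∀ A : Subgroup C,
      z A = ((Nat.card A : ℚ) / (Nat.card (Subgroup.normalizer (A : Set C)) : ℚ)) • x A) :
    (Nat.card C : ℚ) • y = ∑ᶠ A : Subgroup C, (Nat.card A : ℚ) • x A := by
  let : CommGroup C := IsCyclic.commGroup
  have hC : (Nat.card C : ℚ) ≠ 0 := by exact_mod_cast Nat.card_pos.ne'
  have hstratum (A : Subgroup C) : (Nat.card C : ℚ) • z A = (Nat.card A : ℚ) • x A := by
    rw [hnorm A, A.card_normalizer_of_normal, smul_smul, mul_div_cancel₀ _ hC]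
  rw [hpart, smul_finsum]
  exact finsum_congr hstratum
end

section
/- With notation as in the Denef–Loeser theorem, the Euler characteristic Eu(χ_c([φ_{Y,X,C}])) is an integer for every unramified Galois cover Y → X with group G and cyclic subgroup C; moreover if C is trivial then Eu(χ_c([φ_{Y,X,e}])) = Eu(X), and if C is a nontrivial cyclic subgroup then Eu(χ_c([φ_{Y,X,C}])) = 0. -/
open scoped BigOperators

/-- integrality and vanishing of Euler characteristics of the motives
`χ_c([φ_{Y,X,C}])`.  Self-contained version (as suggested): let `G` be a finite group
(the Galois group of an unramified Galois cover `Y → X`), let `eY : ℤ` be the Euler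
characteristic of `Y`, and let `f : Subgroup G → ℚ` send a subgroup `A` to
`Eu(χ_c([φ_{Y,Y/A,A}]))`.  Assume for every cyclic subgroup `C` of `G` the recursion
`|C|·Eu(Y/C) = ∑_{A ≤ C} |A|·f(A)`, where `Eu(Y/C) = Eu(Y)/|C|` since the action is
free.  Then `f(⊥) = Eu(X)·|G| / |G| `-type normalization gives: `f` takes integer values
on cyclic subgroups, `f(⊥) = eY` on the trivial subgroup (so `Eu(χ_c([φ_{Y,X,e}])) =
Eu(X)` after dividing by `|G|`), and `f(C) = 0` for every nontrivial cyclic `C`. -/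
theorem euler_char_chi_c_integral
    {G : Type*} [Group G] [Finite G] (eY : ℤ) (f : Subgroup G → ℚ)
    (hrec : ∀ C : Subgroup G, IsCyclic C →
      (Nat.card C : ℚ) * ((eY : ℚ) / (Nat.card C : ℚ)) =
        ∑ᶠ A : Subgroup C, (Nat.card A : ℚ) * f (A.map C.subtype)) :
    f ⊥ = (eY : ℚ) ∧
    (∀ C : Subgroup G, IsCyclic C → C ≠ ⊥ → f C = 0) ∧
    (∀ C : Subgroup G, IsCyclic C → ∃ m : ℤ, f C = (m : ℚ)) := by
  classical
  have key : ∀ n : ℕ, ∀ C : Subgroup G, IsCyclic C → Nat.card C = n →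
      f C = if C = ⊥ then (eY : ℚ) else 0 := by
    intro n
    induction n using Nat.strong_induction_on with
    | _ n ih =>
      intro C hC hcard
      have hpos : 0 < Nat.card C := Nat.card_pos
      have hne : (Nat.card C : ℚ) ≠ 0 := by positivity
      have hrecC := hrec C hC
      rw [mul_div_cancel₀ _ hne] at hrecC
      have : Fintype (Subgroup C) := Fintype.ofFinite _
      rw [finsum_eq_sum_of_fintype] at hrecC
      -- card of mapped subgroup
      have hcardmap : ∀ A : Subgroup C, Nat.card (A.map C.subtype) = Nat.card A := by
        intro A
        exact (Nat.card_congr (Subgroup.equivMapOfInjective A C.subtype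
          C.subtype_injective).toEquiv).symm
      have hcyc : ∀ A : Subgroup C, IsCyclic (A.map C.subtype) := by
        intro A
        have : IsCyclic A := Subgroup.isCyclic A
        exact isCyclic_of_surjective _ (Subgroup.equivMapOfInjective A C.subtype C.subtype_injective).surjective
      have hbot : ∀ A : Subgroup C, A.map C.subtype = ⊥ ↔ A = ⊥ := by
        intro A
        rw [Subgroup.map_eq_bot_iff_of_injective _ C.subtype_injective]
      by_cases hCbot : C = ⊥
      · subst hCbot
        rw [if_pos rfl]
        have hss : Subsingleton (Subgroup ↥(⊥ : Subgroup G)) :=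
          ⟨fun A B => Subsingleton.elim A B⟩
        rw [Finset.sum_eq_single_of_mem ⊥ (Finset.mem_univ _)
          (fun A _ hA => absurd (Subsingleton.elim A ⊥) hA)] at hrecC
        rw [Subgroup.map_bot, Subgroup.card_bot] at hrecC
        simpa using hrecC.symm
      · -- C nontrivial
        have hnt : Nontrivial ↥C := C.nontrivial_iff_ne_bot.mpr hCbot
        have hbt : (⊥ : Subgroup ↥C) ≠ ⊤ := bot_ne_top
        have hsum : ∑ A : Subgroup ↥C, (Nat.card A : ℚ) * f (A.map C.subtype)
            = ∑ A ∈ ({⊥, ⊤} : Finset (Subgroup ↥C)), (Nat.card A : ℚ) * f (A.map C.subtype) := by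
          refine (Finset.sum_subset (Finset.subset_univ _) ?_).symm
          intro A _ hA
          simp only [Finset.mem_insert, Finset.mem_singleton, not_or] at hA
          obtain ⟨hA1, hA2⟩ := hA
          have hdvd : Nat.card A ∣ Nat.card C := Subgroup.card_subgroup_dvd_card A
          have hlt : Nat.card A < n := by
            rcases lt_or_eq_of_le (Nat.le_of_dvd hpos hdvd) with h | h
            · omega
            · exact absurd (Subgroup.eq_top_of_card_eq A (by simp [h])) hA2
          have := ih _ hlt (A.map C.subtype) (hcyc A) ((hcardmap A).trans rfl)
          rw [this, if_neg (fun hb => hA1 ((hbot A).mp hb)), mul_zero]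
        rw [hsum, Finset.sum_pair hbt] at hrecC
        rw [Subgroup.map_bot] at hrecC
        have hfb : f ⊥ = (eY : ℚ) := by
          have h1lt : 1 < n := by
            have : 1 < Nat.card C := (Subgroup.one_lt_card_iff_ne_bot C).mpr hCbot
            omega
          simpa using ih 1 h1lt ⊥ inferInstance (by simp)
        rw [hfb] at hrecC
        have htop : (⊤ : Subgroup ↥C).map C.subtype = C := by
          rw [← Subgroup.subgroupOf_self, Subgroup.subgroupOf_map_subtype]; simp
        rw [htop] at hrecC
        have hcardtop : Nat.card (⊤ : Subgroup ↥C) = Nat.card ↥C :=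
          Subgroup.card_top
        rw [if_neg hCbot]
        have : (Nat.card (⊤ : Subgroup ↥C) : ℚ) * f C = 0 := by
          rw [Subgroup.card_bot] at hrecC
          push_cast at hrecC ⊢
          linarith [hrecC]
        rw [hcardtop] at this
        exact (mul_eq_zero.mp this).resolve_left hne
  refine ⟨by simpa using key 1 ⊥ inferInstance (by simp), ?_, ?_⟩
  · intro C hC hne
    simpa [hne] using key (Nat.card C) C hC rfl
  · intro C hC
    rcases eq_or_ne C ⊥ with h | h
    · exact ⟨eY, by simpa [h] using key (Nat.card C) C hC rfl⟩
    · exact ⟨0, by simpa [h] using key (Nat.card C) C hC rfl⟩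
end
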